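/- The empirical drifting field defined by alignment-and-inverse-rotation is SE(3)-equivariant: let Y⋆ be a reference pathway, {X_j}_{j=1}^K a swarm of pathways, R_i ∈ SO(3) alignment rotations with aligned pathways X̃_i = R_i(X_i − X̄_i) + Ȳ⋆, affinities A⁺_i = A_{i,0} and A⁻_{ij} = A_{ij} (j ≥ 1) computed from the jointly normalized logits of aligned pathway distances, aligned-frame drift Ṽ(X̃_i) = A⁺_i Σ_{j=1}^K A⁻_{ij}(Y⋆ − X̃_j), and unaligned drift V(X_i) = R_iᵀ · Ṽ(X̃_i) (rotation acting atom-wise). Suppose that when g = (R,t) ∈ SE(3) acts frame-wise on Y⋆ and on every X_j, the alignment rotations transform as R_i ↦ R R_i Rᵀ. Then the empirical drift computed from the transformed data satisfies V(g·X_i)|_{g·Y⋆, {g·X_j}} = R · V(X_i)|_{Y⋆, {X_j}}. -/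

import Mathlib

/-!
STATEMENT 12: The empirical drifting field defined by
alignment-and-inverse-rotation is SE(3)-equivariant. With reference pathway
`Y⋆`, swarm `{X_j}`, alignment rotations `R_i` and aligned pathways
`X̃_i = R_i(X_i − X̄_i) + Ȳ⋆`, affinities `A⁺_i = A_{i,0}`,
`A⁻_{ij} = A_{ij}` (j ≥ 1) from the jointly normalized logits of aligned
pathway distances, aligned-frame drift
`Ṽ(X̃_i) = A⁺_i Σ_{j=1}^K A⁻_{ij}(Y⋆ − X̃_j)` and unaligned drift
`V(X_i) = R_iᵀ · Ṽ(X̃_i)` (rotation acting atom-wise): if, when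
`g = (R,t) ∈ SE(3)` acts frame-wise on `Y⋆` and every `X_j`, the alignment
rotations transform as `R_i ↦ R R_i Rᵀ`, then
`V(g·X_i)|_{g·Y⋆, {g·X_j}} = R · V(X_i)|_{Y⋆, {X_j}}`.
-/

open Matrix

noncomputable section

/-- 3-dimensional Euclidean space for atom positions. -/
abbrev E3 := EuclideanSpace ℝ (Fin 3)

/-- Pathway space `(ℝ^{3N})^F`. -/
abbrev Pathw (F N : ℕ) := Fin F → Fin N → E3

/-- Pathway distance `d(X,Y) = (1/√(3M)) √(Σ_k Σ_n ‖X_k⁽ⁿ⁾ − Y_k⁽ⁿ⁾‖²)`. -/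
def pdist {F N : ℕ} (X Y : Pathw F N) : ℝ :=
  (Real.sqrt (3 * (F * N : ℕ)))⁻¹ * Real.sqrt (∑ k, ∑ n, ‖X k n - Y k n‖ ^ 2)

/-- Frame-wise SE(3) action on pathways: `(g·X)_k⁽ⁿ⁾ = R X_k⁽ⁿ⁾ + t`. -/
def pact {F N : ℕ} (R : Matrix (Fin 3) (Fin 3) ℝ) (t : E3) (X : Pathw F N) :
    Pathw F N :=
  fun k n => Matrix.toEuclideanLin R (X k n) + t

/-- Atom-wise rotation (no translation) acting on pathway displacements. -/
def protOnly {F N : ℕ} (R₀ : Matrix (Fin 3) (Fin 3) ℝ) (P : Pathw F N) :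
    Pathw F N :=
  fun k n => Matrix.toEuclideanLin R₀ (P k n)

/-- Centroid of a pathway over all `M = F·N` atoms. -/
def pcent {F N : ℕ} (P : Pathw F N) : E3 :=
  (((F * N : ℕ) : ℝ))⁻¹ • ∑ k, ∑ n, P k n

/-- Kabsch alignment of a pathway: `X̃ = R₀(X − X̄) + c` (centroid broadcast). -/
def palign {F N : ℕ} (R₀ : Matrix (Fin 3) (Fin 3) ℝ) (c : E3) (P : Pathw F N) :
    Pathw F N :=
  fun k n => Matrix.toEuclideanLin R₀ (P k n - pcent P) + c

/-- The aligned swarm: `X̃_i = R_i(X_i − X̄_i) + Ȳ⋆`. -/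
def alignedSwarm {F N K : ℕ} (Ri : Fin K → Matrix (Fin 3) (Fin 3) ℝ)
    (Ystar : Pathw F N) (X : Fin K → Pathw F N) : Fin K → Pathw F N :=
  fun i => palign (Ri i) (pcent Ystar) (X i)

/-- Augmented target set `T = (Y⋆, X̃_1, …, X̃_K)`. -/
def targets {F N K : ℕ} (Ystar : Pathw F N) (Xt : Fin K → Pathw F N) :
    Fin (K + 1) → Pathw F N :=
  Fin.cons Ystar Xt

/-- Pairwise logits `L_{ij} = −d(X̃_i, T_j)/τ`. -/
def logits {F N K : ℕ} (τ : ℝ) (Ri : Fin K → Matrix (Fin 3) (Fin 3) ℝ)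
    (Ystar : Pathw F N) (X : Fin K → Pathw F N) :
    Fin K → Fin (K + 1) → ℝ :=
  fun i j =>
    -(pdist (alignedSwarm Ri Ystar X i) (targets Ystar (alignedSwarm Ri Ystar X) j)) / τ

/-- Row softmax `σ_row(L)_{ij} = exp(L_{ij})/Σ_{j'} exp(L_{ij'})`. -/
def rowSoftmax {K : ℕ} (L : Fin K → Fin (K + 1) → ℝ) (i : Fin K)
    (j : Fin (K + 1)) : ℝ :=
  Real.exp (L i j) / ∑ j', Real.exp (L i j')

/-- Column softmax `σ_col(L)_{ij} = exp(L_{ij})/Σ_{i'} exp(L_{i'j})`. -/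
def colSoftmax {K : ℕ} (L : Fin K → Fin (K + 1) → ℝ) (i : Fin K)
    (j : Fin (K + 1)) : ℝ :=
  Real.exp (L i j) / ∑ i', Real.exp (L i' j)

/-- Geometric-mean joint affinities `A_{ij} = √(σ_row(L)_{ij} σ_col(L)_{ij})`. -/
def affinity {F N K : ℕ} (τ : ℝ) (Ri : Fin K → Matrix (Fin 3) (Fin 3) ℝ)
    (Ystar : Pathw F N) (X : Fin K → Pathw F N) :
    Fin K → Fin (K + 1) → ℝ :=
  fun i j =>
    Real.sqrt (rowSoftmax (logits τ Ri Ystar X) i j * colSoftmax (logits τ Ri Ystar X) i j)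

/-- Aligned-frame empirical drift `Ṽ(X̃_i) = A⁺_i Σ_{j=1}^K A⁻_{ij}(Y⋆ − X̃_j)`,
with `A⁺_i = A_{i,0}` and `A⁻_{ij} = A_{i,j}` for `j ≥ 1`. -/
def driftAligned {F N K : ℕ} (τ : ℝ) (Ri : Fin K → Matrix (Fin 3) (Fin 3) ℝ)
    (Ystar : Pathw F N) (X : Fin K → Pathw F N) : Fin K → Pathw F N :=
  fun i =>
    affinity τ Ri Ystar X i 0 •
      ∑ j : Fin K, affinity τ Ri Ystar X i j.succ •
        (Ystar - alignedSwarm Ri Ystar X j)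

/-- Unaligned empirical drift `V(X_i) = R_iᵀ · Ṽ(X̃_i)` (rotation atom-wise). -/
def driftEmp {F N K : ℕ} (τ : ℝ) (Ri : Fin K → Matrix (Fin 3) (Fin 3) ℝ)
    (Ystar : Pathw F N) (X : Fin K → Pathw F N) : Fin K → Pathw F N :=
  fun i => protOnly (Ri i)ᵀ (driftAligned τ Ri Ystar X i)

/-! The group action commutes with alignment: conjugating the alignment rotations and moving the
reference centroid to `R Ȳ⋆ + t` sends each aligned pathway `X̃_i` to `g·X̃_i`. Pathway distances
are `g`-invariant (the translation cancels in differences and `R` is an isometry), so the logits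
and affinities do not change, and the aligned drift, a combination of the differences
`Y⋆ − X̃_j`, is rotated by `R`. Undoing the conjugated alignment then leaves
`(R R_i Rᵀ)ᵀ R = R R_iᵀ`. -/

namespace Matrix

theorem norm_toEuclideanLin_of_mem_unitaryGroup {𝕜 n : Type*} [RCLike 𝕜] [Fintype n]
    [DecidableEq n] {U : Matrix n n 𝕜} (hU : U ∈ unitaryGroup n 𝕜) (v : EuclideanSpace 𝕜 n) :
    ‖toEuclideanLin U v‖ = ‖v‖ :=
  ContinuousLinearMap.norm_map_of_mem_unitary
    (Unitary.map_mem (toEuclideanCLM (n := n) (𝕜 := 𝕜)) hU) v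

end Matrix

open Matrix

section PathwayGeometry

variable {F N : ℕ}

theorem protOnly_mul (A B : Matrix (Fin 3) (Fin 3) ℝ) (P : Pathw F N) :
    protOnly (A * B) P = protOnly A (protOnly B P) := by
  funext k n
  simp [protOnly]

theorem protOnly_eq_compLeft (A : Matrix (Fin 3) (Fin 3) ℝ) :
    protOnly (F := F) (N := N) A
      = ((toEuclideanLin A).compLeft (Fin N)).compLeft (Fin F) :=
  rfl

theorem pact_sub_pact (R : Matrix (Fin 3) (Fin 3) ℝ) (t : E3) (P Q : Pathw F N) :
    pact R t P - pact R t Q = protOnly R (P - Q) := by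
  funext k n
  simp only [pact, protOnly, Pi.sub_apply, map_sub]
  abel

theorem pdist_pact {R : Matrix (Fin 3) (Fin 3) ℝ} (hR : R ∈ orthogonalGroup (Fin 3) ℝ)
    (t : E3) (P Q : Pathw F N) :
    pdist (pact R t P) (pact R t Q) = pdist P Q := by
  have hsub (k n) : pact R t P k n - pact R t Q k n = toEuclideanLin R (P k n - Q k n) :=
    congrFun (congrFun (pact_sub_pact R t P Q) k) n
  simp only [pdist, hsub, norm_toEuclideanLin_of_mem_unitaryGroup hR]

theorem pcent_pact (hM : F * N ≠ 0) (R : Matrix (Fin 3) (Fin 3) ℝ) (t : E3) (P : Pathw F N) :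
    pcent (pact R t P) = toEuclideanLin R (pcent P) + t := by
  have hsum : ∑ k, ∑ n, pact R t P k n
      = toEuclideanLin R (∑ k, ∑ n, P k n) + (F * N) • t := by
    simp [pact, Finset.sum_add_distrib, map_sum, mul_smul]
  rw [pcent, pcent, hsum, smul_add, map_smul, ← Nat.cast_smul_eq_nsmul ℝ, smul_smul,
    inv_mul_cancel₀ (by exact_mod_cast hM), one_smul]

theorem palign_pact (hM : F * N ≠ 0) {R : Matrix (Fin 3) (Fin 3) ℝ}
    (hR : R ∈ orthogonalGroup (Fin 3) ℝ) (t : E3) (R₀ : Matrix (Fin 3) (Fin 3) ℝ) (c : E3)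
    (P : Pathw F N) :
    palign (R * R₀ * Rᵀ) (toEuclideanLin R c + t) (pact R t P) = pact R t (palign R₀ c P) := by
  have hRtR : Rᵀ * R = 1 := (mem_orthogonalGroup_iff' (Fin 3) ℝ).mp hR
  funext k n
  have hcentred : pact R t P k n - pcent (pact R t P) = toEuclideanLin R (P k n - pcent P) := by
    rw [pcent_pact hM, pact, map_sub]
    abel
  rw [palign, hcentred, ← LinearMap.comp_apply, ← toLpLin_mul_same, mul_assoc (R * R₀), hRtR,
    mul_one, toLpLin_mul_same, LinearMap.comp_apply, pact, palign, map_add]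
  abel

end PathwayGeometry

section Drift

variable {F N K : ℕ} (τ : ℝ) {R : Matrix (Fin 3) (Fin 3) ℝ}
  (hR : R ∈ orthogonalGroup (Fin 3) ℝ) (t : E3) (Ri : Fin K → Matrix (Fin 3) (Fin 3) ℝ)
  (Ystar : Pathw F N) (X : Fin K → Pathw F N)
include hR

theorem alignedSwarm_conj_pact :
    alignedSwarm (fun i => R * Ri i * Rᵀ) (pact R t Ystar) (fun j => pact R t (X j))
      = fun i => pact R t (alignedSwarm Ri Ystar X i) := by
  funext i k n
  -- `pcent` takes a junk value when `F * N = 0`; an atom `k n` rules that case out.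
  have hM : F * N ≠ 0 := Nat.mul_ne_zero k.pos.ne' n.pos.ne'
  simp only [alignedSwarm, pcent_pact hM, palign_pact hM hR]

theorem logits_conj_pact :
    logits τ (fun i => R * Ri i * Rᵀ) (pact R t Ystar) (fun j => pact R t (X j))
      = logits τ Ri Ystar X := by
  funext i j
  rw [logits, logits, alignedSwarm_conj_pact hR]
  cases j using Fin.cases <;> simp [targets, pdist_pact hR]

theorem affinity_conj_pact :
    affinity τ (fun i => R * Ri i * Rᵀ) (pact R t Ystar) (fun j => pact R t (X j))
      = affinity τ Ri Ystar X := by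
  unfold affinity
  rw [logits_conj_pact τ hR]

theorem driftAligned_conj_pact (i : Fin K) :
    driftAligned τ (fun i => R * Ri i * Rᵀ) (pact R t Ystar) (fun j => pact R t (X j)) i
      = protOnly R (driftAligned τ Ri Ystar X i) := by
  unfold driftAligned
  rw [affinity_conj_pact τ hR, alignedSwarm_conj_pact hR]
  simp only [pact_sub_pact, protOnly_eq_compLeft, map_sum, map_smul]

end Drift

theorem driftEmp_SE3_equivariant_general {F N K : ℕ} (τ : ℝ)
    (R : Matrix (Fin 3) (Fin 3) ℝ)
    (hR : R ∈ Matrix.orthogonalGroup (Fin 3) ℝ)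
    (t : E3)
    (Ri : Fin K → Matrix (Fin 3) (Fin 3) ℝ)
    (Ystar : Pathw F N) (X : Fin K → Pathw F N) :
    ∀ i, driftEmp τ (fun i => R * Ri i * Rᵀ) (pact R t Ystar)
        (fun j => pact R t (X j)) i
      = protOnly R (driftEmp τ Ri Ystar X i) := by
  intro i
  have hconj : (R * Ri i * Rᵀ)ᵀ * R = R * (Ri i)ᵀ := by
    rw [transpose_mul, transpose_mul, transpose_transpose, mul_assoc, mul_assoc,
      (mem_orthogonalGroup_iff' (Fin 3) ℝ).mp hR, mul_one]
  rw [driftEmp, driftEmp, driftAligned_conj_pact τ hR, ← protOnly_mul, hconj, protOnly_mul]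

/-- SE(3)-equivariance of the empirical drifting field: when `g = (R,t)` acts
frame-wise on the reference and the swarm and the alignment rotations
transform by conjugation `R_i ↦ R R_i Rᵀ`, the empirical drift transforms by
the rotation `R` alone. -/
theorem driftEmp_SE3_equivariant {F N K : ℕ} (τ : ℝ) (hτ : 0 < τ)
    (R : Matrix (Fin 3) (Fin 3) ℝ)
    (hR : R ∈ Matrix.orthogonalGroup (Fin 3) ℝ) (hdet : R.det = 1)
    (t : E3)
    (Ri : Fin K → Matrix (Fin 3) (Fin 3) ℝ)
    (hRi : ∀ i, Ri i ∈ Matrix.orthogonalGroup (Fin 3) ℝ ∧ (Ri i).det = 1)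
    (Ystar : Pathw F N) (X : Fin K → Pathw F N) :
    ∀ i, driftEmp τ (fun i => R * Ri i * Rᵀ) (pact R t Ystar)
        (fun j => pact R t (X j)) i
      = protOnly R (driftEmp τ Ri Ystar X i) :=
  driftEmp_SE3_equivariant_general τ R hR t Ri Ystar X

end
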